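/- arXiv:1805.03736 — 2 statements merged into one kernel-verified Lean document; each statement's English description precedes it below -/
import Mathlib

section
/- For each n ≥ 1 and κ > 0, the iterated core set satisfies K^n_κ(w) = ⋂_{κ' < κ} K^n_{κ'}(w), and hence the κ-core K_κ(w) = ⋂_n K^n_κ(w) satisfies K_κ(w) = ⋂_{κ' < κ} K_{κ'}(w). -/
open MeasureTheory Set Filter Topology

/-- A graphon: symmetric measurable `w : [0,1]² → [0,1]` (stated on all of ℝ²). -/
def Graphon (w : ℝ → ℝ → ℝ) : Prop :=
  Measurable (Function.uncurry w) ∧ (∀ x y, w x y = w y x) ∧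
    ∀ x y, w x y ∈ Set.Icc (0 : ℝ) 1

/-- Degree of `x` restricted to `K`: `d_w^K(x) = ∫_K w(x,y) dy`. -/
noncomputable def degK (w : ℝ → ℝ → ℝ) (K : Set ℝ) (x : ℝ) : ℝ := ∫ y in K, w x y

/-- Iterated peeling sets: `coreIter w κ n = K^{n+1}_κ(w)` (so index 0 is `K¹`). -/
noncomputable def coreIter (w : ℝ → ℝ → ℝ) (κ : ℝ) : ℕ → Set ℝ
  | 0 => {x ∈ Set.Icc (0 : ℝ) 1 | κ ≤ degK w (Set.Icc 0 1) x}
  | n + 1 => {x ∈ coreIter w κ n | κ ≤ degK w (coreIter w κ n) x}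

/-- The κ-core `K_κ(w) = ⋂ₙ K^n_κ(w)`. -/
noncomputable def core (w : ℝ → ℝ → ℝ) (κ : ℝ) : Set ℝ := ⋂ n, coreIter w κ n

/-- Shell index `δ_x(w) = sup {κ : x ∈ K_κ(w)}`. -/
noncomputable def shell (w : ℝ → ℝ → ℝ) (x : ℝ) : ℝ := sSup {κ | x ∈ core w κ}

/-- Degeneracy `δ(w) = sup {κ : |K_κ(w)| > 0}`. -/
noncomputable def degen (w : ℝ → ℝ → ℝ) : ℝ := sSup {κ | 0 < volume (core w κ)}

/-- Cut-norm distance `d_□`. -/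
noncomputable def cutDist (w w' : ℝ → ℝ → ℝ) : ℝ :=
  sSup {r | ∃ S T : Set ℝ, MeasurableSet S ∧ MeasurableSet T ∧
    S ⊆ Set.Icc 0 1 ∧ T ⊆ Set.Icc 0 1 ∧
    r = |∫ x in S, ∫ y in T, (w x y - w' x y)|}

/-- A measure-preserving map of `[0,1]`. -/
def MPMap (σ : ℝ → ℝ) : Prop :=
  Measurable σ ∧ Set.MapsTo σ (Set.Icc 0 1) (Set.Icc 0 1) ∧
    ∀ A : Set ℝ, MeasurableSet A → A ⊆ Set.Icc 0 1 →
      volume (σ ⁻¹' A ∩ Set.Icc 0 1) = volume A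

/-- Cut metric `δ_□(w,w') = inf_σ d_□(w^σ, w')`. -/
noncomputable def cutMetric (w w' : ℝ → ℝ → ℝ) : ℝ :=
  sInf {r | ∃ σ : ℝ → ℝ, MPMap σ ∧ r = cutDist (fun x y => w (σ x) (σ y)) w'}

section aux

variable {w : ℝ → ℝ → ℝ}

lemma meas_wx (hw : Graphon w) (x : ℝ) : Measurable (w x) :=
  hw.1.comp (measurable_prodMk_left)

lemma integr (hw : Graphon w) (x : ℝ) {K : Set ℝ} (hK : K ⊆ Set.Icc 0 1) :
    IntegrableOn (w x) K volume := by
  apply Measure.integrableOn_of_bounded (M := 1)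
  · exact ne_top_of_le_ne_top (by simp) (measure_mono hK)
  · exact (meas_wx hw x).aestronglyMeasurable
  · refine Filter.Eventually.of_forall fun y => ?_
    have := hw.2.2 x y
    rw [Real.norm_eq_abs, abs_le]
    constructor <;> linarith [this.1, this.2]

lemma coreIter_subset_Icc (κ : ℝ) : ∀ n, coreIter w κ n ⊆ Set.Icc 0 1
  | 0 => fun x hx => hx.1
  | n + 1 => fun x hx => coreIter_subset_Icc κ n hx.1

lemma degK_measurable (hw : Graphon w) (K : Set ℝ) : Measurable (degK w K) := by
  have : StronglyMeasurable fun x => ∫ y, Function.uncurry w (x, y) ∂(volume.restrict K) :=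
    hw.1.stronglyMeasurable.integral_prod_right'
  exact this.measurable

lemma coreIter_measurable (hw : Graphon w) (κ : ℝ) : ∀ n, MeasurableSet (coreIter w κ n)
  | 0 => measurableSet_Icc.inter ((degK_measurable hw _) measurableSet_Ici)
  | n + 1 => (coreIter_measurable hw κ n).inter ((degK_measurable hw _) measurableSet_Ici)

lemma degK_mono (hw : Graphon w) (x : ℝ) {A B : Set ℝ} (hAB : A ⊆ B)
    (hB : B ⊆ Set.Icc 0 1) : degK w A x ≤ degK w B x := by
  refine setIntegral_mono_set (integr hw x hB) ?_ (HasSubset.Subset.eventuallyLE hAB)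
  exact Filter.Eventually.of_forall fun y => (hw.2.2 x y).1

lemma coreIter_anti (hw : Graphon w) {κ₁ κ₂ : ℝ} (h : κ₁ ≤ κ₂) :
    ∀ n, coreIter w κ₂ n ⊆ coreIter w κ₁ n
  | 0 => fun x hx => ⟨hx.1, h.trans hx.2⟩
  | n + 1 => fun x hx =>
    ⟨coreIter_anti hw h n hx.1,
      h.trans (hx.2.trans (degK_mono hw x (coreIter_anti hw h n) (coreIter_subset_Icc κ₁ n)))⟩

end aux

theorem stmt1 (w : ℝ → ℝ → ℝ) (hw : Graphon w) (κ : ℝ) (hκ : 0 < κ) :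
    (∀ n : ℕ, coreIter w κ n = ⋂ κ' ∈ Set.Iio κ, coreIter w κ' n) ∧
    core w κ = ⋂ κ' ∈ Set.Iio κ, core w κ' := by
  -- the sequence κₘ = κ - κ/(m+1) increases to κ
  set g : ℕ → ℝ := fun m => κ - κ / (m + 1) with hg
  have hglt : ∀ m, g m < κ := fun m => by
    have : (0 : ℝ) < κ / (m + 1) := div_pos hκ (by positivity)
    simp [hg]; linarith
  have hgmono : Monotone g := by
    intro a b hab
    have : κ / (b + 1) ≤ κ / (a + 1) := by
      apply div_le_div_of_nonneg_left hκ.le (by positivity)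
      exact_mod_cast by omega
    simp [hg]; linarith
  have hgt : Tendsto g atTop (𝓝 κ) := by
    have h0 : Tendsto (fun m : ℕ => κ / (m + 1)) atTop (𝓝 0) := by
      have := (tendsto_const_div_atTop_nhds_zero_nat κ).comp (tendsto_add_atTop_nat 1)
      convert this using 2 with m
      push_cast [Function.comp]; ring_nf
    have := tendsto_const_nhds.sub h0 (f := fun _ : ℕ => κ)
    simpa using this
  have key : ∀ n : ℕ, coreIter w κ n = ⋂ κ' ∈ Set.Iio κ, coreIter w κ' n := by
    intro n
    induction n with
    | zero =>
      ext x
      simp only [coreIter, Set.mem_setOf_eq, Set.mem_iInter, Set.mem_Iio]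
      constructor
      · rintro ⟨h1, h2⟩ κ' hκ'
        exact ⟨h1, hκ'.le.trans h2⟩
      · intro h
        have hx1 : x ∈ Set.Icc (0:ℝ) 1 := (h 0 hκ).1
        refine ⟨hx1, ?_⟩
        by_contra hlt
        push_neg at hlt
        obtain ⟨c, hc1, hc2⟩ := exists_between hlt
        exact absurd (h c hc2).2 (not_le.mpr hc1)
    | succ n ih =>
      ext x
      simp only [coreIter, Set.mem_setOf_eq, Set.mem_iInter, Set.mem_Iio]
      constructor
      · rintro ⟨h1, h2⟩ κ' hκ'
        refine ⟨coreIter_anti hw hκ'.le n h1, hκ'.le.trans (h2.trans ?_)⟩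
        exact degK_mono hw x (coreIter_anti hw hκ'.le n) (coreIter_subset_Icc κ' n)
      · intro h
        have hxn : x ∈ coreIter w κ n := by
          rw [ih]
          exact Set.mem_iInter₂.mpr fun κ' hκ' => (h κ' hκ').1
        refine ⟨hxn, ?_⟩
        -- ⋂ m, coreIter w (g m) n = coreIter w κ n
        have hiInter : (⋂ m, coreIter w (g m) n) = coreIter w κ n := by
          apply Set.Subset.antisymm
          · rw [ih]
            intro y hy
            refine Set.mem_iInter₂.mpr fun κ' hκ' => ?_
            obtain ⟨m, hm⟩ := (hgt.eventually (eventually_gt_nhds hκ')).exists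
            exact coreIter_anti hw hm.le n (Set.mem_iInter.mp hy m)
          · intro y hy
            exact Set.mem_iInter.mpr fun m => coreIter_anti hw (hglt m).le n hy
        have hanti : Antitone fun m => coreIter w (g m) n :=
          fun a b hab => coreIter_anti hw (hgmono hab) n
        have htend : Tendsto (fun m => ∫ y in coreIter w (g m) n, w x y) atTop
            (𝓝 (∫ y in ⋂ m, coreIter w (g m) n, w x y)) := by
          refine tendsto_setIntegral_of_antitone (fun m => coreIter_measurable hw _ n)
            hanti ⟨0, integr hw x (coreIter_subset_Icc _ n)⟩
        rw [hiInter] at htend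
        have hle : ∀ m, g m ≤ ∫ y in coreIter w (g m) n, w x y :=
          fun m => (h (g m) (hglt m)).2
        exact le_of_tendsto_of_tendsto' hgt htend hle
  refine ⟨key, ?_⟩
  unfold core
  ext x
  simp only [Set.mem_iInter, Set.mem_Iio]
  constructor
  · intro h κ' hκ' n
    have := (key n) ▸ (h n)
    exact Set.mem_iInter₂.mp this κ' hκ'
  · intro h n
    rw [key n]
    exact Set.mem_iInter₂.mpr fun κ' hκ' => h κ' hκ' n
end

section
/- For the graphon w(x,y) = min{x,y}, the κ-core equals the interval [½(1−√(1−4κ)), 1] for κ ≤ 1/4, and is empty for κ > 1/4; consequently the degeneracy of w is 1/4. -/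
open MeasureTheory Set Filter

lemma sqrt_le_of {r c : ℝ} (hc : 0 ≤ c) (h : r ≤ c^2) : Real.sqrt r ≤ c := by
  calc Real.sqrt r ≤ Real.sqrt (c^2) := Real.sqrt_le_sqrt h
  _ = c := Real.sqrt_sq hc

lemma le_sqrt_of {r c : ℝ} (hc : 0 ≤ c) (h : c^2 ≤ r) : c ≤ Real.sqrt r := by
  calc c = Real.sqrt (c^2) := (Real.sqrt_sq hc).symm
  _ ≤ Real.sqrt r := Real.sqrt_le_sqrt h

lemma deg_formula (a x : ℝ) (hax : a ≤ x) (hx1 : x ≤ 1) :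
    degK (fun x y => min x y) (Set.Icc a 1) x = x - x^2/2 - a^2/2 := by
  have ha1 : a ≤ 1 := hax.trans hx1
  have h1 : degK (fun x y => min x y) (Set.Icc a 1) x = ∫ y in a..1, min x y := by
    rw [degK, MeasureTheory.integral_Icc_eq_integral_Ioc,
      ← intervalIntegral.integral_of_le ha1]
  have hcont : Continuous fun y : ℝ => min x y := continuous_const.min continuous_id
  rw [h1, ← intervalIntegral.integral_add_adjacent_intervals (b := x)
    (hcont.intervalIntegrable a x) (hcont.intervalIntegrable x 1)]
  have e1 : ∫ y in a..x, min x y = ∫ y in a..x, y := by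
    apply intervalIntegral.integral_congr
    intro y hy
    rw [Set.uIcc_of_le hax] at hy
    exact min_eq_right hy.2
  have e2 : ∫ y in x..1, min x y = ∫ y in x..1, x := by
    apply intervalIntegral.integral_congr
    intro y hy
    rw [Set.uIcc_of_le hx1] at hy
    exact min_eq_left hy.1
  rw [e1, e2, integral_id, intervalIntegral.integral_const]
  simp only [smul_eq_mul]
  ring

noncomputable def gfun (κ a : ℝ) : ℝ := 1 - Real.sqrt (1 - 2*κ - a^2)

lemma stepA (κ a : ℝ) (h0 : 0 ≤ a) (ha1 : a ≤ 1) (hk : a - a^2 ≤ κ) (hr : 0 ≤ 1 - 2*κ - a^2) :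
    {x ∈ Set.Icc a 1 | κ ≤ degK (fun x y => min x y) (Set.Icc a 1) x}
      = Set.Icc (gfun κ a) 1 := by
  have hs0 : 0 ≤ Real.sqrt (1 - 2*κ - a^2) := Real.sqrt_nonneg _
  have hs2 : (Real.sqrt (1 - 2*κ - a^2))^2 = 1 - 2*κ - a^2 := Real.sq_sqrt hr
  have hga : a ≤ gfun κ a := by
    have : Real.sqrt (1 - 2*κ - a^2) ≤ 1 - a := sqrt_le_of (by linarith) (by nlinarith)
    simp only [gfun]; linarith
  ext x
  simp only [Set.mem_setOf_eq, Set.mem_Icc]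
  constructor
  · rintro ⟨⟨hax, hx1⟩, hd⟩
    rw [deg_formula a x hax hx1] at hd
    refine ⟨?_, hx1⟩
    have h1x : (1-x) ≤ Real.sqrt (1 - 2*κ - a^2) := le_sqrt_of (by linarith) (by nlinarith)
    simp only [gfun]; linarith
  · rintro ⟨hgx, hx1⟩
    have hax : a ≤ x := le_trans hga hgx
    refine ⟨⟨hax, hx1⟩, ?_⟩
    rw [deg_formula a x hax hx1]
    have h1x : 1 - x ≤ Real.sqrt (1 - 2*κ - a^2) := by simp only [gfun] at hgx; linarith
    nlinarith [mul_self_le_mul_self (by linarith : (0:ℝ) ≤ 1 - x) h1x]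

lemma stepB (κ a : ℝ) (hr : 1 - 2*κ - a^2 < 0) :
    {x ∈ Set.Icc a 1 | κ ≤ degK (fun x y => min x y) (Set.Icc a 1) x} = ∅ := by
  ext x
  simp only [Set.mem_setOf_eq, Set.mem_Icc, Set.mem_empty_iff_false, iff_false, not_and]
  rintro ⟨hax, hx1⟩ hd
  rw [deg_formula a x hax hx1] at hd
  nlinarith [sq_nonneg (1 - x)]

noncomputable def bseq (κ : ℝ) : ℕ → ℝ
  | 0 => 0
  | n + 1 => gfun κ (bseq κ n)

section Part1
variable {κ : ℝ}

lemma astar_sq (h0 : 0 ≤ κ) (h4 : κ ≤ 1/4) :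
    ((1 - Real.sqrt (1 - 4*κ))/2) - ((1 - Real.sqrt (1 - 4*κ))/2)^2 = κ := by
  have h : (Real.sqrt (1 - 4*κ))^2 = 1 - 4*κ := Real.sq_sqrt (by linarith)
  nlinarith [Real.sqrt_nonneg (1 - 4*κ)]

lemma astar_mem (h0 : 0 ≤ κ) (h4 : κ ≤ 1/4) :
    0 ≤ (1 - Real.sqrt (1 - 4*κ))/2 ∧ (1 - Real.sqrt (1 - 4*κ))/2 ≤ 1/2 := by
  have hs0 : 0 ≤ Real.sqrt (1 - 4*κ) := Real.sqrt_nonneg _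
  have hs1 : Real.sqrt (1 - 4*κ) ≤ 1 := sqrt_le_of (by norm_num) (by nlinarith)
  constructor <;> linarith

lemma gfun_bounds (h0 : 0 ≤ κ) (h4 : κ ≤ 1/4) {a : ℝ} (ha0 : 0 ≤ a)
    (ha : a ≤ (1 - Real.sqrt (1 - 4*κ))/2) :
    a ≤ gfun κ a ∧ gfun κ a ≤ (1 - Real.sqrt (1 - 4*κ))/2 ∧ 0 ≤ 1 - 2*κ - a^2 := by
  set A := (1 - Real.sqrt (1 - 4*κ))/2 with hA
  obtain ⟨hA0, hA2⟩ := astar_mem h0 h4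
  have hAk : A - A^2 = κ := astar_sq h0 h4
  have hrad : (1 - A)^2 ≤ 1 - 2*κ - a^2 := by nlinarith
  have hr : 0 ≤ 1 - 2*κ - a^2 := le_trans (sq_nonneg _) hrad
  have hk : a - a^2 ≤ κ := by nlinarith
  refine ⟨?_, ?_, hr⟩
  · have : Real.sqrt (1 - 2*κ - a^2) ≤ 1 - a := sqrt_le_of (by linarith) (by nlinarith)
    simp only [gfun]; linarith
  · have : 1 - A ≤ Real.sqrt (1 - 2*κ - a^2) := le_sqrt_of (by linarith) hrad
    simp only [gfun]; linarith

lemma bseq_bounds (h0 : 0 ≤ κ) (h4 : κ ≤ 1/4) :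
    ∀ n, 0 ≤ bseq κ n ∧ bseq κ n ≤ (1 - Real.sqrt (1 - 4*κ))/2 := by
  intro n
  induction n with
  | zero => exact ⟨le_refl 0, (astar_mem h0 h4).1⟩
  | succ n ih =>
    obtain ⟨h1, h2, _⟩ := gfun_bounds h0 h4 ih.1 ih.2
    exact ⟨le_trans ih.1 h1, h2⟩

lemma bseq_mono (h0 : 0 ≤ κ) (h4 : κ ≤ 1/4) : Monotone (bseq κ) := by
  apply monotone_nat_of_le_succ
  intro n
  exact (gfun_bounds h0 h4 (bseq_bounds h0 h4 n).1 (bseq_bounds h0 h4 n).2).1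

lemma coreIter_eq (h0 : 0 ≤ κ) (h4 : κ ≤ 1/4) :
    ∀ n, coreIter (fun x y => min x y) κ n = Set.Icc (bseq κ (n+1)) 1 := by
  intro n
  induction n with
  | zero =>
    have := stepA κ 0 le_rfl zero_le_one (by norm_num; linarith) (by norm_num; linarith)
    simpa [coreIter, bseq] using this
  | succ n ih =>
    have hb := bseq_bounds h0 h4 (n+1)
    have hA2 := (astar_mem h0 h4).2
    have hAk := astar_sq h0 h4
    have hk : bseq κ (n+1) - (bseq κ (n+1))^2 ≤ κ := by nlinarith [hb.1, hb.2]
    have hr := (gfun_bounds h0 h4 hb.1 hb.2).2.2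
    show {x ∈ coreIter (fun x y => min x y) κ n |
        κ ≤ degK (fun x y => min x y) (coreIter (fun x y => min x y) κ n) x}
      = Set.Icc (bseq κ (n+2)) 1
    rw [ih]
    exact stepA κ (bseq κ (n+1)) hb.1 (le_trans hb.2 (by linarith)) hk hr

lemma bseq_lim (h0 : 0 ≤ κ) (h4 : κ ≤ 1/4) :
    (⨆ n, bseq κ n) = (1 - Real.sqrt (1 - 4*κ))/2 := by
  set A := (1 - Real.sqrt (1 - 4*κ))/2 with hA
  obtain ⟨hA0, hA2⟩ := astar_mem h0 h4
  have hAk : A - A^2 = κ := astar_sq h0 h4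
  have hbdd : BddAbove (Set.range (bseq κ)) :=
    ⟨A, by rintro _ ⟨n, rfl⟩; exact (bseq_bounds h0 h4 n).2⟩
  set L := ⨆ n, bseq κ n with hL
  have htend : Tendsto (bseq κ) atTop (nhds L) :=
    tendsto_atTop_ciSup (bseq_mono h0 h4) hbdd
  have hL0 : 0 ≤ L := le_ciSup hbdd 0
  have hLA : L ≤ A := ciSup_le fun n => (bseq_bounds h0 h4 n).2
  have hgont : Continuous (gfun κ) := by
    have hg : gfun κ = fun a => 1 - Real.sqrt (1 - 2*κ - a^2) := rfl
    rw [hg]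
    exact continuous_const.sub ((continuous_const.sub (continuous_pow 2)).sqrt)
  have h1 : Tendsto (fun n => bseq κ (n+1)) atTop (nhds L) :=
    htend.comp (tendsto_add_atTop_nat 1)
  have h2 : Tendsto (fun n => gfun κ (bseq κ n)) atTop (nhds (gfun κ L)) :=
    (hgont.tendsto L).comp htend
  have hfix : gfun κ L = L := tendsto_nhds_unique h2 h1
  have hr : 0 ≤ 1 - 2*κ - L^2 := (gfun_bounds h0 h4 hL0 hLA).2.2
  have hs2 : (Real.sqrt (1 - 2*κ - L^2))^2 = 1 - 2*κ - L^2 := Real.sq_sqrt hr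
  have hsL : Real.sqrt (1 - 2*κ - L^2) = 1 - L := by simp only [gfun] at hfix; linarith
  have hLk : L - L^2 = κ := by nlinarith [hsL ▸ hs2]
  nlinarith [hLA, hA2, hL0]

lemma core_eq (h0 : 0 ≤ κ) (h4 : κ ≤ 1/4) :
    core (fun x y => min x y) κ = Set.Icc ((1 - Real.sqrt (1 - 4*κ))/2) 1 := by
  have hbdd : BddAbove (Set.range (bseq κ)) :=
    ⟨(1 - Real.sqrt (1 - 4*κ))/2, by rintro _ ⟨n, rfl⟩; exact (bseq_bounds h0 h4 n).2⟩
  ext x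
  simp only [core, Set.mem_iInter, coreIter_eq h0 h4, Set.mem_Icc]
  constructor
  · intro h
    refine ⟨?_, (h 0).2⟩
    rw [← bseq_lim h0 h4]
    apply ciSup_le
    intro n
    cases n with
    | zero => exact le_trans (bseq_bounds h0 h4 1).1 (h 0).1
    | succ m => exact (h m).1
  · rintro ⟨hAx, hx1⟩ n
    refine ⟨le_trans ?_ hAx, hx1⟩
    rw [← bseq_lim h0 h4]
    exact le_ciSup hbdd (n+1)

end Part1

section Part2
variable {κ : ℝ}

lemma coreIter_shrink (hκ : 1/4 < κ) :
    ∀ n, (coreIter (fun x y => min x y) κ n).Nonempty →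
      ∃ a, 0 ≤ a ∧ a ≤ 1 ∧ ((n : ℝ) + 1) * (κ - 1/4) ≤ a ∧
        coreIter (fun x y => min x y) κ n = Set.Icc a 1 := by
  intro n
  induction n with
  | zero =>
    intro hne
    by_cases hr : 0 ≤ 1 - 2*κ - (0:ℝ)^2
    · refine ⟨gfun κ 0, ?_, ?_, ?_, ?_⟩
      · have : Real.sqrt (1 - 2*κ - 0^2) ≤ 1 := sqrt_le_of zero_le_one (by nlinarith)
        simp only [gfun]; linarith
      · have := Real.sqrt_nonneg (1 - 2*κ - (0:ℝ)^2)
        simp only [gfun]; linarith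
      · have hc : Real.sqrt (1 - 2*κ - 0^2) ≤ 5/4 - κ :=
          sqrt_le_of (by nlinarith) (by nlinarith)
        simp only [gfun]; push_cast; linarith
      · have := stepA κ 0 le_rfl zero_le_one (by norm_num; linarith) hr
        simpa [coreIter] using this
    · exfalso
      have := stepB κ 0 (by push_neg at hr; linarith)
      rw [show coreIter (fun x y => min x y) κ 0
          = {x ∈ Set.Icc (0:ℝ) 1 | κ ≤ degK (fun x y => min x y) (Set.Icc 0 1) x} from rfl]
          at hne
      rw [this] at hne
      exact hne.ne_empty rfl
  | succ n ih =>
    intro hne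
    have hsub : coreIter (fun x y => min x y) κ (n+1) ⊆ coreIter (fun x y => min x y) κ n :=
      fun x hx => hx.1
    obtain ⟨a, ha0, ha1, han, heq⟩ := ih (hne.mono hsub)
    have hstep : coreIter (fun x y => min x y) κ (n+1)
        = {x ∈ Set.Icc a 1 | κ ≤ degK (fun x y => min x y) (Set.Icc a 1) x} := by
      show {x ∈ coreIter (fun x y => min x y) κ n |
          κ ≤ degK (fun x y => min x y) (coreIter (fun x y => min x y) κ n) x} = _
      rw [heq]
    by_cases hr : 0 ≤ 1 - 2*κ - a^2
    · have hk : a - a^2 ≤ κ := by nlinarith [sq_nonneg (2*a - 1)]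
      have heq2 := stepA κ a ha0 ha1 hk hr
      have hs0 := Real.sqrt_nonneg (1 - 2*κ - a^2)
      have hc : Real.sqrt (1 - 2*κ - a^2) ≤ 5/4 - κ - a :=
        sqrt_le_of (by nlinarith [sq_nonneg (a-1)])
          (by nlinarith [sq_nonneg (a - 1/2), sq_nonneg (κ - 1/4), mul_nonneg ha0 (by linarith : (0:ℝ) ≤ κ - 1/4)])
      refine ⟨gfun κ a, ?_, ?_, ?_, by rw [hstep, heq2]⟩
      · simp only [gfun]; linarith
      · simp only [gfun]; linarith
      · simp only [gfun]; push_cast; linarith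
    · exfalso
      have := stepB κ a (by push_neg at hr; linarith)
      rw [hstep, this] at hne
      exact hne.ne_empty rfl

lemma core_empty (hκ : 1/4 < κ) : core (fun x y => min x y) κ = ∅ := by
  have hε : 0 < κ - 1/4 := by linarith
  obtain ⟨n, hn⟩ := exists_nat_gt ((1 : ℝ) / (κ - 1/4))
  have hempty : coreIter (fun x y => min x y) κ n = ∅ := by
    by_contra h
    obtain ⟨a, _, ha1, han, _⟩ := coreIter_shrink hκ n (Set.nonempty_iff_ne_empty.2 h)
    have h1 : (1:ℝ) < (n : ℝ) * (κ - 1/4) := by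
      rw [div_lt_iff₀ hε] at hn; linarith
    nlinarith
  exact Set.eq_empty_of_subset_empty (hempty ▸ Set.iInter_subset _ n)

end Part2

lemma core_neg {κ : ℝ} (hκ : κ < 0) : core (fun x y => min x y) κ = Set.Icc 0 1 := by
  have key : ∀ x ∈ Set.Icc (0:ℝ) 1, κ ≤ degK (fun x y => min x y) (Set.Icc 0 1) x := by
    rintro x ⟨hx0, hx1⟩
    rw [deg_formula 0 x hx0 hx1]
    nlinarith
  have hiter : ∀ n, coreIter (fun x y => min x y) κ n = Set.Icc 0 1 := by
    intro n
    induction n with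
    | zero =>
      show {x ∈ Set.Icc (0:ℝ) 1 | κ ≤ degK (fun x y => min x y) (Set.Icc 0 1) x} = _
      ext x; simp only [Set.mem_setOf_eq, and_iff_left_iff_imp]
      exact key x
    | succ n ih =>
      show {x ∈ coreIter (fun x y => min x y) κ n |
          κ ≤ degK (fun x y => min x y) (coreIter (fun x y => min x y) κ n) x} = _
      rw [ih]
      ext x; simp only [Set.mem_setOf_eq, and_iff_left_iff_imp]
      exact key x
  simp [core, hiter, Set.iInter_const]

lemma degen_min : degen (fun x y => min x y) = 1 / 4 := by
  have hset : {κ | 0 < volume (core (fun x y => min x y) κ)} = Set.Iic (1/4 : ℝ) := by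
    ext κ
    simp only [Set.mem_setOf_eq, Set.mem_Iic]
    constructor
    · intro h
      by_contra hgt
      push_neg at hgt
      rw [core_empty hgt] at h
      simp at h
    · intro h4
      rcases lt_or_ge κ 0 with h0 | h0
      · rw [core_neg h0, Real.volume_Icc]
        norm_num
      · rw [core_eq h0 h4, Real.volume_Icc]
        have hs1 : Real.sqrt (1 - 4*κ) ≤ 1 := sqrt_le_of zero_le_one (by nlinarith)
        have hs0 := Real.sqrt_nonneg (1 - 4*κ)
        apply ENNReal.ofReal_pos.2
        linarith
  rw [degen, hset, csSup_Iic]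


theorem stmt18 :
    (∀ κ ∈ Set.Icc (0 : ℝ) (1 / 4),
      core (fun x y => min x y) κ = Set.Icc ((1 - Real.sqrt (1 - 4 * κ)) / 2) 1) ∧
    (∀ κ : ℝ, 1 / 4 < κ → core (fun x y => min x y) κ = ∅) ∧
    degen (fun x y => min x y) = 1 / 4 :=
  ⟨fun κ hκ => core_eq hκ.1 hκ.2, fun κ h => core_empty h, degen_min⟩
end
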